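/- arXiv:2204.03674 — 2 statements merged into one kernel-verified Lean document; each statement's English description precedes it below -/
import Mathlib

section
/- Let N be a positive integer, d a divisor of N, and χ a Dirichlet character modulo N. Then the sum of χ(a) over all a in (Z/NZ)* with a ≡ 1 (mod d) equals φ(N)/φ(d) if the conductor of χ divides d, and equals 0 otherwise. -/
open Finset

/-!
The units `a ≡ 1 (mod d)` form the kernel `K` of the reduction map `(ZMod N)ˣ → (ZMod d)ˣ`,
which is surjective, so `K` has order `φ(N)/φ(d)`. A character summed over a finite group
vanishes unless it is trivial there, and `χ` is trivial on `K` exactly when it factors through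
level `d`, i.e. when its conductor divides `d`.
-/

theorem Subgroup.sum_hom_units_eq_ite {G R : Type*} [Group G] [CommRing R] [IsDomain R]
    (ψ : G →* Rˣ) (K : Subgroup G) [Fintype K] [Decidable (K ≤ ψ.ker)] :
    ∑ x : K, (ψ x : R) = if K ≤ ψ.ker then (Nat.card K : R) else 0 := by
  classical
  let f : K →* R := ((Units.coeHom R).comp ψ).domRestrict K
  have hf : f = 1 ↔ K ≤ ψ.ker := by simp [f, SetLike.le_def]
  calc ∑ x : K, (ψ x : R) = ∑ x : K, f x := rfl
    _ = ((if f = 1 then Fintype.card K else 0 : ℕ) : R) := sum_hom_units f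
    _ = _ := by simp only [hf, Nat.card_eq_fintype_card, Nat.cast_ite, Nat.cast_zero]

theorem ZMod.card_ker_unitsMap {N d : ℕ} [NeZero N] (hd : d ∣ N) :
    Nat.card (ZMod.unitsMap hd).ker = N.totient / d.totient := by
  have : NeZero d := ⟨by rintro rfl; exact NeZero.ne N (Nat.eq_zero_of_zero_dvd hd)⟩
  have h := (ZMod.unitsMap hd).ker.card_mul_index
  rw [Subgroup.index_ker, MonoidHom.range_eq_top.mpr (ZMod.unitsMap_surjective hd),
    Subgroup.card_top] at h
  simp only [Nat.card_eq_fintype_card, ZMod.card_units_eq_totient] at h ⊢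
  exact Nat.eq_div_of_mul_eq_left (Nat.totient_pos.mpr (NeZero.pos d)).ne' h

theorem DirichletCharacter.ker_unitsMap_le_ker_iff_conductor_dvd {R : Type*} [CommMonoidWithZero R]
    {N d : ℕ} [NeZero N] (hd : d ∣ N) (χ : DirichletCharacter R N) :
    (ZMod.unitsMap hd).ker ≤ χ.toUnitHom.ker ↔ χ.conductor ∣ d := by
  rw [← factorsThrough_iff_ker_unitsMap hd, ← mem_conductorSet_iff_conductor_dvd χ hd]
  rfl

/-- For a Dirichlet character `χ` mod `N` and a divisor `d` of `N`, the sum of `χ(a)`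
over units `a` of `ZMod N` with `a ≡ 1 (mod d)` equals `φ(N)/φ(d)` if the conductor
of `χ` divides `d`, and equals `0` otherwise. -/
theorem sum_char_on_units_congruent_one {N d : ℕ} [NeZero N] (hd : d ∣ N)
    (χ : DirichletCharacter ℂ N) :
    ∑ a ∈ Finset.univ.filter (fun a : (ZMod N)ˣ => ZMod.unitsMap hd a = 1), χ a =
      if χ.conductor ∣ d then ((N.totient / d.totient : ℕ) : ℂ) else 0 := by
  classical
  rw [Finset.sum_subtype _ (p := (· ∈ (ZMod.unitsMap hd).ker)) (by simp)]
  simp_rw [← MulChar.coe_toUnitHom]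
  rw [Subgroup.sum_hom_units_eq_ite, ZMod.card_ker_unitsMap hd]
  simp only [χ.ker_unitsMap_le_ker_iff_conductor_dvd hd]
end

section
/- Let f be a Q-valued function on (Z/NZ)* with character decomposition f = Σ_χ c_χ χ over Dirichlet characters χ mod N. If for every prime p dividing N, τ_p denotes a generator of Gal(Q(ζ_N)/Q(ζ_{N/p})), then f is imprimitive mod N (i.e., c_χ = 0 for every character χ of conductor N) if and only if ∏_{p | N} (1 − τ_p) annihilates the group-ring element P(f) = Σ_{(a,N)=1} f(a) σ_a in Q[Gal(Q(ζ_N)/Q)]. -/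
/-!
A character `χ` of `(ZMod N)ˣ` extends to an algebra map `ℚ[(ZMod N)ˣ] → ℂ`, and by orthogonality
these maps jointly detect zero. The map attached to `χ` sends `∏ₚ (1 - τₚ) P(f)` to
`∏ₚ (1 - χ τₚ) · ∑ₐ f a χ a`. Since `τₚ` generates the kernel of reduction mod `N / p`,
`χ τₚ = 1` exactly when `χ` factors through `N / p`, and `χ` is imprimitive exactly when it
factors through `N / p` for some prime `p ∣ N`. So the product factor vanishes precisely at the
imprimitive characters, and the annihilation says that every primitive `χ` kills `f`.
-/

open Finset

theorem Nat.exists_mem_primeFactors_dvd_div {d n : ℕ} (hn : n ≠ 0) (hd : d ∣ n) (hdn : d ≠ n) :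
    ∃ p ∈ n.primeFactors, d ∣ n / p := by
  obtain ⟨p, hp, hpd⟩ := Nat.exists_prime_and_dvd fun h => hdn (Nat.eq_of_dvd_of_div_eq_one hd h)
  have hdp : d * p ∣ n := Nat.mul_div_cancel' hd ▸ mul_dvd_mul_left d hpd
  exact ⟨p, Nat.mem_primeFactors.mpr ⟨hp, (dvd_mul_left p d).trans hdp, hn⟩,
    Nat.dvd_div_of_mul_dvd (mul_comm d p ▸ hdp)⟩

namespace DirichletCharacter

variable {R : Type*} {N : ℕ}

section CommMonoidWithZero

variable [NeZero N] [CommMonoidWithZero R] (χ : DirichletCharacter R N)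

theorem conductor_ne_level_iff_exists_factorsThrough :
    χ.conductor ≠ N ↔ ∃ p ∈ N.primeFactors, χ.FactorsThrough (N / p) := by
  constructor
  · intro h
    obtain ⟨p, hp, hdvd⟩ :=
      Nat.exists_mem_primeFactors_dvd_div (NeZero.ne N) χ.conductor_dvd_level h
    exact ⟨p, hp, χ.factorsThrough_conductor.mono χ hdvd (Nat.div_dvd_of_dvd
      (Nat.dvd_of_mem_primeFactors hp))⟩
  · rintro ⟨p, hp, hχ⟩
    have hle : χ.conductor ≤ N / p := Nat.sInf_le hχ
    have hlt : N / p < N :=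
      Nat.div_lt_self (NeZero.pos N) (Nat.prime_of_mem_primeFactors hp).one_lt
    omega

variable {χ} in
theorem factorsThrough_iff_apply_eq_one {d : ℕ} (hd : d ∣ N) {τ : (ZMod N)ˣ}
    (hτ : Subgroup.zpowers τ = (ZMod.unitsMap hd).ker) :
    χ.FactorsThrough d ↔ χ τ = 1 := by
  rw [factorsThrough_iff_ker_unitsMap hd, ← hτ, Subgroup.zpowers_le, MonoidHom.mem_ker,
    Units.ext_iff, MulChar.coe_toUnitHom, Units.val_one]

end CommMonoidWithZero

theorem prod_one_sub_apply_eq_zero_iff_conductor_ne [NeZero N] [CommRing R] [IsDomain R]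
    {τ : ℕ → (ZMod N)ˣ} (hτ : ∀ p (hp : p ∈ N.primeFactors), Subgroup.zpowers (τ p) =
      (ZMod.unitsMap (Nat.div_dvd_of_dvd (Nat.dvd_of_mem_primeFactors hp))).ker)
    (χ : DirichletCharacter R N) :
    ∏ p ∈ N.primeFactors, (1 - χ (τ p)) = 0 ↔ χ.conductor ≠ N := by
  rw [prod_eq_zero_iff, conductor_ne_level_iff_exists_factorsThrough]
  refine exists_congr fun p => and_congr_right fun hp => ?_
  rw [sub_eq_zero, eq_comm, factorsThrough_iff_apply_eq_one _ (hτ p hp)]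

section GroupAlgebra

variable {K : Type*} [CommSemiring K] [CommRing R] [Algebra K R]

variable (K) in
noncomputable def toAlgHom (χ : DirichletCharacter R N) : MonoidAlgebra K (ZMod N)ˣ →ₐ[K] R :=
  MonoidAlgebra.lift K R (ZMod N)ˣ ((Units.coeHom R).comp χ.toUnitHom)

@[simp]
theorem toAlgHom_single (χ : DirichletCharacter R N) (a : (ZMod N)ˣ) (c : K) :
    χ.toAlgHom K (MonoidAlgebra.single a c) = algebraMap K R c * χ a := by
  simp [toAlgHom, MonoidAlgebra.lift_single, Algebra.smul_def]

theorem toAlgHom_apply [NeZero N] (χ : DirichletCharacter R N) (x : MonoidAlgebra K (ZMod N)ˣ) :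
    χ.toAlgHom K x = ∑ a, algebraMap K R (x.coeff a) * χ a := by
  rw [toAlgHom, MonoidAlgebra.lift_apply', Finsupp.sum_fintype _ _ (by simp)]
  rfl

theorem sum_apply_inv_mul_toAlgHom [NeZero N] [IsDomain R]
    [HasEnoughRootsOfUnity R (Monoid.exponent (ZMod N)ˣ)]
    (x : MonoidAlgebra K (ZMod N)ˣ) (b : (ZMod N)ˣ) :
    ∑ χ : DirichletCharacter R N, χ ((b : ZMod N)⁻¹) * χ.toAlgHom K x =
      N.totient * algebraMap K R (x.coeff b) := by
  simp_rw [toAlgHom_apply, mul_sum, mul_left_comm _ (algebraMap K R _)]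
  rw [sum_comm]
  simp_rw [← mul_sum, sum_char_inv_mul_char_eq R b.isUnit, Units.val_inj, mul_ite, mul_zero,
    sum_ite_eq, if_pos (mem_univ b), mul_comm]

end GroupAlgebra

theorem forall_toAlgHom_eq_zero_iff {K : Type*} [NeZero N] [Field K] [Field R] [CharZero R]
    [Algebra K R] [HasEnoughRootsOfUnity R (Monoid.exponent (ZMod N)ˣ)]
    (x : MonoidAlgebra K (ZMod N)ˣ) :
    (∀ χ : DirichletCharacter R N, χ.toAlgHom K x = 0) ↔ x = 0 := by
  refine ⟨fun h => MonoidAlgebra.coeff_injective (Finsupp.ext fun b => ?_),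
    fun h χ => h ▸ map_zero _⟩
  have hsum := sum_apply_inv_mul_toAlgHom (R := R) x b
  simp only [h, mul_zero, sum_const_zero] at hsum
  simpa [(Nat.totient_pos.mpr (NeZero.pos N)).ne'] using hsum.symm

end DirichletCharacter

-- Supplies `HasEnoughRootsOfUnity ℂ (Monoid.exponent (ZMod N)ˣ)` for character orthogonality.
instance {G : Type*} [LeftCancelMonoid G] [Finite G] : NeZero (Monoid.exponent G) :=
  ⟨Monoid.exponent_ne_zero_of_finite⟩

theorem imprimitive_iff_prod_one_sub_tau_annihilates_general {N : ℕ} [NeZero N]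
    (f : (ZMod N)ˣ → ℚ) (τ : ℕ → (ZMod N)ˣ)
    (hτ : ∀ p (hp : p ∈ N.primeFactors),
      Subgroup.zpowers (τ p) =
        (ZMod.unitsMap (Nat.div_dvd_of_dvd (Nat.dvd_of_mem_primeFactors hp))).ker) :
    (∀ χ : DirichletCharacter ℂ N, χ.conductor = N →
        ∑ a : (ZMod N)ˣ, (f a : ℂ) * χ a = 0) ↔
      (∏ p ∈ N.primeFactors,
          ((1 : MonoidAlgebra ℚ (ZMod N)ˣ) - MonoidAlgebra.single (τ p) 1)) *
        (∑ a : (ZMod N)ˣ, MonoidAlgebra.single a (f a)) = 0 := by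
  rw [← DirichletCharacter.forall_toAlgHom_eq_zero_iff (R := ℂ)]
  refine forall_congr' fun χ => ?_
  simp only [map_mul, map_prod, map_sub, map_one, map_sum, DirichletCharacter.toAlgHom_single,
    eq_ratCast, one_mul]
  rw [mul_eq_zero, DirichletCharacter.prod_one_sub_apply_eq_zero_iff_conductor_ne hτ,
    imp_iff_not_or]

/-- Let `f : (ZMod N)ˣ → ℚ`. For each prime `p ∣ N`, let `τ p` be a generator of the
subgroup of `(ZMod N)ˣ` corresponding to `Gal(Q(ζ_N)/Q(ζ_{N/p}))`, i.e. the kernel of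
the reduction map `(ZMod N)ˣ → (ZMod (N/p))ˣ`.  Then `f` is imprimitive mod `N`
(its character decomposition involves no character of conductor `N`) if and only if
`∏_{p ∣ N} (1 - τ_p)` annihilates `P(f) = ∑_a f(a) σ_a` in the group ring
`ℚ[(ZMod N)ˣ] ≅ ℚ[Gal(Q(ζ_N)/Q)]`. -/
theorem imprimitive_iff_prod_one_sub_tau_annihilates {N : ℕ} [NeZero N] (hN : 1 < N)
    (f : (ZMod N)ˣ → ℚ) (τ : ℕ → (ZMod N)ˣ)
    (hτ : ∀ p (hp : p ∈ N.primeFactors),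
      Subgroup.zpowers (τ p) =
        (ZMod.unitsMap (Nat.div_dvd_of_dvd (Nat.dvd_of_mem_primeFactors hp))).ker) :
    (∀ χ : DirichletCharacter ℂ N, χ.conductor = N →
        ∑ a : (ZMod N)ˣ, (f a : ℂ) * χ a = 0) ↔
      (∏ p ∈ N.primeFactors,
          ((1 : MonoidAlgebra ℚ (ZMod N)ˣ) - MonoidAlgebra.single (τ p) 1)) *
        (∑ a : (ZMod N)ˣ, MonoidAlgebra.single a (f a)) = 0 :=
  imprimitive_iff_prod_one_sub_tau_annihilates_general f τ hτ
end
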